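/- arXiv:2012.03467 — 2 statements merged into one kernel-verified Lean document; each statement's English description precedes it below -/
import Mathlib

section
/- Let z = (r; u) ∈ ℍ^{d+1} in polar coordinates with r ≥ 1 and let 1 ≤ ρ. Then the volume of B⁺(z,ρ) := B(z,ρ) ∩ B(0,r) satisfies Vol(B⁺(z,ρ)) ≥ c · e^{d(ρ ∧ r)/2} for some constant c > 0 depending only on d. -/
/-!
Rotate `u` to the first basis vector `e₀` and put `E = e^{-r}`, `T = tanh (r/2) = (1 - E)/(1 + E)`
and `q = ρ ∧ r`. The Euclidean box `[T - E/2, T - E/4] × [-h, h]^d` with `h ≍ e^{q/2} E` lies in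
`B⁺(T e₀, ρ)`: it stays inside the sphere `‖x‖ = T`, and on it
`cosh d(T e₀, x) = 1 + 2‖T e₀ - x‖² / ((1 - T²)(1 - ‖x‖²)) ≤ 7/6 + e^q/24 < cosh ρ`, because
`‖T e₀ - x‖² ≲ E² + e^q E²` while both factors of the denominator are `≍ E`.
The density `(2/(1 - ‖x‖²))^{d+1}` is `≳ E^{-(d+1)}` on the box, whose Euclidean volume is
`≍ E (e^{q/2} E)^d`; the powers of `E` cancel and leave `e^{dq/2}`.
-/

open Real MeasureTheory

noncomputable section

/-- Inverse hyperbolic cosine. -/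
def arcosh (x : ℝ) : ℝ := Real.log (x + Real.sqrt (x ^ 2 - 1))

/-- The hyperbolic distance on `ℍ^{d+1}` in the Poincaré ball model. -/
def hDist {d : ℕ} (z w : EuclideanSpace ℝ (Fin (d + 1))) : ℝ :=
  _root_.arcosh (1 + 2 * ‖z - w‖ ^ 2 / ((1 - ‖z‖ ^ 2) * (1 - ‖w‖ ^ 2)))

/-- The hyperbolic volume measure on `ℍ^{d+1}` in the ball model. -/
def hVolume (d : ℕ) : Measure (EuclideanSpace ℝ (Fin (d + 1))) :=
  (volume.restrict (Metric.ball (0 : EuclideanSpace ℝ (Fin (d + 1))) 1)).withDensity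
    (fun x => ENNReal.ofReal ((2 / (1 - ‖x‖ ^ 2)) ^ (d + 1)))

/-- The point of `ℍ^{d+1}` with polar coordinates `(r; u)` around the origin. -/
def polar {d : ℕ} (r : ℝ) (u : EuclideanSpace ℝ (Fin (d + 1))) :
    EuclideanSpace ℝ (Fin (d + 1)) :=
  Real.tanh (r / 2) • u

/-- `B⁺(z,ρ) = B(z,ρ) ∩ B(0, d(0,z))`: the part of the hyperbolic ball of radius `ρ`
around `z` lying strictly closer to the origin than `z`. -/
def Bplus {d : ℕ} (z : EuclideanSpace ℝ (Fin (d + 1))) (ρ : ℝ) :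
    Set (EuclideanSpace ℝ (Fin (d + 1))) :=
  {w | ‖w‖ < 1 ∧ hDist z w < ρ ∧ hDist 0 w < hDist 0 z}

open Set

section HyperbolicDistance

variable {d : ℕ}

theorem one_sub_norm_sq_pos {V : Type*} [SeminormedAddGroup V] {z : V} (hz : ‖z‖ < 1) :
    0 < 1 - ‖z‖ ^ 2 :=
  sub_pos.2 (pow_lt_one₀ (norm_nonneg z) hz two_ne_zero)

theorem one_le_one_add_hDist_frac {z w : EuclideanSpace ℝ (Fin (d + 1))} (hz : ‖z‖ < 1)
    (hw : ‖w‖ < 1) : 1 ≤ 1 + 2 * ‖z - w‖ ^ 2 / ((1 - ‖z‖ ^ 2) * (1 - ‖w‖ ^ 2)) :=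
  le_add_of_nonneg_right <|
    div_nonneg (by positivity) (mul_pos (one_sub_norm_sq_pos hz) (one_sub_norm_sq_pos hw)).le

theorem cosh_hDist {z w : EuclideanSpace ℝ (Fin (d + 1))} (hz : ‖z‖ < 1) (hw : ‖w‖ < 1) :
    cosh (hDist z w) = 1 + 2 * ‖z - w‖ ^ 2 / ((1 - ‖z‖ ^ 2) * (1 - ‖w‖ ^ 2)) :=
  Real.cosh_arcosh (one_le_one_add_hDist_frac hz hw)

theorem hDist_nonneg {z w : EuclideanSpace ℝ (Fin (d + 1))} (hz : ‖z‖ < 1) (hw : ‖w‖ < 1) :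
    0 ≤ hDist z w :=
  Real.arcosh_nonneg (one_le_one_add_hDist_frac hz hw)

theorem hDist_lt_iff_cosh_lt {z w : EuclideanSpace ℝ (Fin (d + 1))} {ρ : ℝ} (hz : ‖z‖ < 1)
    (hw : ‖w‖ < 1) (hρ : 0 ≤ ρ) : hDist z w < ρ ↔ cosh (hDist z w) < cosh ρ := by
  rw [Real.cosh_lt_cosh, abs_of_nonneg hρ, abs_of_nonneg (hDist_nonneg hz hw)]

theorem hDist_zero_lt_hDist_zero {x z : EuclideanSpace ℝ (Fin (d + 1))} (hxz : ‖x‖ < ‖z‖)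
    (hz : ‖z‖ < 1) : hDist 0 x < hDist 0 z := by
  have h0 : ‖(0 : EuclideanSpace ℝ (Fin (d + 1)))‖ < 1 := by simp
  rw [hDist_lt_iff_cosh_lt h0 (hxz.trans hz) (hDist_nonneg h0 hz),
    cosh_hDist h0 (hxz.trans hz), cosh_hDist h0 hz]
  have hsq : ‖x‖ ^ 2 < ‖z‖ ^ 2 := pow_lt_pow_left₀ hxz (norm_nonneg x) two_ne_zero
  have key : 2 * ‖x‖ ^ 2 / (1 - ‖x‖ ^ 2) < 2 * ‖z‖ ^ 2 / (1 - ‖z‖ ^ 2) := by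
    rw [div_lt_div_iff₀ (one_sub_norm_sq_pos (hxz.trans hz)) (one_sub_norm_sq_pos hz)]
    nlinarith
  simpa using key

theorem hDist_map (f : EuclideanSpace ℝ (Fin (d + 1)) →ₗᵢ[ℝ] EuclideanSpace ℝ (Fin (d + 1)))
    (z w : EuclideanSpace ℝ (Fin (d + 1))) : hDist (f z) (f w) = hDist z w := by
  rw [hDist, hDist, ← map_sub, f.norm_map, f.norm_map, f.norm_map]

theorem preimage_Bplus (f : EuclideanSpace ℝ (Fin (d + 1)) →ₗᵢ[ℝ] EuclideanSpace ℝ (Fin (d + 1)))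
    (z : EuclideanSpace ℝ (Fin (d + 1))) (ρ : ℝ) : f ⁻¹' Bplus (f z) ρ = Bplus z ρ := by
  ext w
  change ‖f w‖ < 1 ∧ hDist (f z) (f w) < ρ ∧ hDist 0 (f w) < hDist 0 (f z) ↔ _
  rw [← f.map_zero, hDist_map, hDist_map, hDist_map, f.norm_map]
  rfl

end HyperbolicDistance

section AxialBox

variable {d : ℕ}

def axialBox (d : ℕ) (a b h : ℝ) : Set (EuclideanSpace ℝ (Fin (d + 1))) :=
  WithLp.ofLp ⁻¹' univ.pi (Fin.cons (Icc a b) fun _ => Icc (-h) h)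

theorem mem_axialBox {a b h : ℝ} {x : EuclideanSpace ℝ (Fin (d + 1))} :
    x ∈ axialBox d a b h ↔ x 0 ∈ Icc a b ∧ ∀ i : Fin d, x i.succ ∈ Icc (-h) h := by
  simp [axialBox, Fin.forall_fin_succ]

theorem measurableSet_axialBox (a b h : ℝ) : MeasurableSet (axialBox d a b h) :=
  (MeasurableSet.univ_pi (Fin.cases measurableSet_Icc fun _ => measurableSet_Icc)).preimage
    (WithLp.measurable_ofLp 2 _)

theorem volume_axialBox (a b : ℝ) {h : ℝ} (hh : 0 ≤ h) :
    volume (axialBox d a b h) = ENNReal.ofReal ((b - a) * (2 * h) ^ d) := by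
  rw [axialBox, (PiLp.volume_preserving_ofLp _).measure_preimage
    (MeasurableSet.univ_pi fun i => ?_).nullMeasurableSet, volume_pi_pi, Fin.prod_univ_succ]
  · simp only [Fin.cons_zero, Fin.cons_succ, Real.volume_Icc, Finset.prod_const,
      Finset.card_univ, Fintype.card_fin]
    rw [sub_neg_eq_add, ← two_mul, ← ENNReal.ofReal_pow (by positivity),
      ← ENNReal.ofReal_mul' (by positivity)]
  · exact Fin.cases measurableSet_Icc (fun _ => measurableSet_Icc) i

theorem le_norm_of_mem_axialBox {a b h : ℝ} {x : EuclideanSpace ℝ (Fin (d + 1))}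
    (hx : x ∈ axialBox d a b h) : a ≤ ‖x‖ :=
  ((mem_axialBox.1 hx).1.1.trans (le_abs_self _)).trans (PiLp.norm_apply_le x 0)

theorem norm_sq_le_of_mem_axialBox {a b h : ℝ} {x : EuclideanSpace ℝ (Fin (d + 1))} (ha : 0 ≤ a)
    (hx : x ∈ axialBox d a b h) : ‖x‖ ^ 2 ≤ b ^ 2 + d * h ^ 2 := by
  obtain ⟨⟨hxa, hxb⟩, hxi⟩ := mem_axialBox.1 hx
  rw [EuclideanSpace.norm_sq_eq, Fin.sum_univ_succ]
  have hsum : ∑ i : Fin d, ‖x i.succ‖ ^ 2 ≤ d * h ^ 2 := by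
    simpa using Finset.sum_le_sum fun i (_ : i ∈ Finset.univ) =>
      sq_le_sq' (hxi i).1 (hxi i).2
  have hx0 : ‖x 0‖ ^ 2 ≤ b ^ 2 := by
    rw [Real.norm_eq_abs, sq_abs]
    exact pow_le_pow_left₀ (ha.trans hxa) hxb 2
  linarith

theorem single_sub_mem_axialBox {a b h t : ℝ} {x : EuclideanSpace ℝ (Fin (d + 1))}
    (hx : x ∈ axialBox d a b h) : EuclideanSpace.single 0 t - x ∈ axialBox d (t - b) (t - a) h := by
  obtain ⟨⟨hxa, hxb⟩, hxi⟩ := mem_axialBox.1 hx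
  refine mem_axialBox.2 ⟨by simp; constructor <;> linarith, fun i => ?_⟩
  simpa [Fin.succ_ne_zero, and_comm, neg_le] using hxi i

end AxialBox

theorem ofReal_mul_volume_le_hVolume {d : ℕ} {S : Set (EuclideanSpace ℝ (Fin (d + 1)))} {ε : ℝ}
    (hS : ∀ x ∈ S, ‖x‖ < 1 ∧ 1 - ‖x‖ ^ 2 ≤ ε) :
    ENNReal.ofReal ((2 / ε) ^ (d + 1)) * volume S ≤ hVolume d S := by
  rw [hVolume, withDensity_apply' _ S, Measure.restrict_restrict' measurableSet_ball,
    inter_eq_self_of_subset_left fun x hx => mem_ball_zero_iff.2 (hS x hx).1, ← setLIntegral_const]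
  refine setLIntegral_mono (by fun_prop) fun x hx => ENNReal.ofReal_le_ofReal ?_
  have hx₀ := one_sub_norm_sq_pos (hS x hx).1
  have hε := hx₀.trans_le (hS x hx).2
  gcongr
  exact (hS x hx).2

theorem tanh_half_mul_one_add_exp_neg (r : ℝ) :
    tanh (r / 2) * (1 + exp (-r)) = 1 - exp (-r) := by
  have h : exp (-r) = exp (-(r / 2)) ^ 2 := by rw [← exp_nat_mul]; ring_nf
  have hab : exp (r / 2) * exp (-(r / 2)) = 1 := by rw [← exp_add, add_neg_cancel, exp_zero]
  rw [tanh_eq_sinh_div_cosh, sinh_eq, cosh_eq, h]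
  field_simp
  linear_combination 2 * exp (-(r / 2)) * hab

section TanhHalf

variable {E T : ℝ}

theorem one_third_le_of_mul_one_add_eq (hE : 0 < E) (hE2 : E ≤ 1 / 2)
    (hT : T * (1 + E) = 1 - E) : 1 / 3 ≤ T := by
  nlinarith

theorem lt_one_of_mul_one_add_eq (hE : 0 < E) (hT : T * (1 + E) = 1 - E) : T < 1 := by
  nlinarith

theorem le_one_sub_sq_of_mul_one_add_eq (hE : 0 < E) (hE2 : E ≤ 1 / 2)
    (hT : T * (1 + E) = 1 - E) : 16 * E / 9 ≤ 1 - T ^ 2 := by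
  have h1 : (1 - T ^ 2) * (1 + E) ^ 2 = 4 * E := by
    linear_combination (-(T * (1 + E) + (1 - E))) * hT
  have h2 : 0 ≤ 1 - T ^ 2 := by nlinarith
  nlinarith [mul_le_mul_of_nonneg_left (by nlinarith : (1 + E) ^ 2 ≤ 9 / 4) h2]

theorem one_sub_sq_le_of_mul_one_add_eq (hE : 0 < E) (hE2 : E ≤ 1 / 2)
    (hT : T * (1 + E) = 1 - E) : 1 - (T - E / 2) ^ 2 ≤ 5 * E := by
  have h3 := one_third_le_of_mul_one_add_eq hE hE2 hT
  have h1 : 1 - T ≤ 2 * E := by nlinarith [lt_one_of_mul_one_add_eq hE hT]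
  have h2 : 1 - (T - E / 2) ^ 2 = (1 - T + E / 2) * (1 + T - E / 2) := by ring
  rw [h2]
  nlinarith [mul_le_mul_of_nonneg_right (by linarith : 1 - T + E / 2 ≤ 5 * E / 2)
    (by linarith : (0 : ℝ) ≤ 1 + T - E / 2)]

theorem sq_add_lt_sq_of_mul_one_add_eq (hE : 0 < E) (hE2 : E ≤ 1 / 2)
    (hT : T * (1 + E) = 1 - E) : (T - E / 4) ^ 2 + E / 16 < T ^ 2 := by
  have h3 := one_third_le_of_mul_one_add_eq hE hE2 hT
  nlinarith

end TanhHalf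

section BoxInBplus

variable {d : ℕ} {E T h : ℝ} {x : EuclideanSpace ℝ (Fin (d + 1))}

theorem norm_single_zero {t : ℝ} (ht : 0 ≤ t) :
    ‖EuclideanSpace.single (0 : Fin (d + 1)) t‖ = t := by
  rw [PiLp.norm_single, Real.norm_eq_abs, abs_of_nonneg ht]

theorem norm_lt_of_mem_axialBox (hE : 0 < E) (hE2 : E ≤ 1 / 2) (hT : T * (1 + E) = 1 - E)
    (hh : d * h ^ 2 ≤ E / 16) (hx : x ∈ axialBox d (T - E / 2) (T - E / 4) h) : ‖x‖ < T := by
  have hT3 := one_third_le_of_mul_one_add_eq hE hE2 hT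
  have hsq := norm_sq_le_of_mem_axialBox (by linarith) hx
  have hTsq := sq_add_lt_sq_of_mul_one_add_eq hE hE2 hT
  exact lt_of_pow_lt_pow_left₀ 2 (by linarith) (by linarith)

theorem one_sub_norm_sq_le_of_mem_axialBox {b : ℝ} (hE : 0 < E) (hE2 : E ≤ 1 / 2)
    (hT : T * (1 + E) = 1 - E) (hx : x ∈ axialBox d (T - E / 2) b h) :
    1 - ‖x‖ ^ 2 ≤ 5 * E := by
  have hT3 := one_third_le_of_mul_one_add_eq hE hE2 hT
  have hx0 := pow_le_pow_left₀ (by linarith) (le_norm_of_mem_axialBox hx) 2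
  linarith [one_sub_sq_le_of_mul_one_add_eq hE hE2 hT]

theorem hDist_single_lt_of_mem_axialBox {q ρ : ℝ} (hE : 0 < E) (hE2 : E ≤ 1 / 2)
    (hT : T * (1 + E) = 1 - E) (hq : 1 ≤ q) (hqρ : q ≤ ρ) (hqE : exp q * E ≤ 1)
    (hh : d * h ^ 2 ≤ exp q * E ^ 2 / 16) (hx : x ∈ axialBox d (T - E / 2) (T - E / 4) h) :
    hDist (EuclideanSpace.single 0 T) x < ρ := by
  have hT3 := one_third_le_of_mul_one_add_eq hE hE2 hT
  have hT1 := lt_one_of_mul_one_add_eq hE hT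
  have hxT := norm_lt_of_mem_axialBox hE hE2 hT (by nlinarith) hx
  have hz : ‖EuclideanSpace.single (0 : Fin (d + 1)) T‖ = T := norm_single_zero (by linarith)
  have hz1 : ‖EuclideanSpace.single (0 : Fin (d + 1)) T‖ < 1 := hz.trans_lt hT1
  rw [hDist_lt_iff_cosh_lt hz1 (hxT.trans hT1) (by linarith), cosh_hDist hz1 (hxT.trans hT1),
    hz]
  have hnum : ‖EuclideanSpace.single 0 T - x‖ ^ 2 ≤ (E / 2) ^ 2 + d * h ^ 2 := by
    simpa using norm_sq_le_of_mem_axialBox (by linarith) (single_sub_mem_axialBox (t := T) hx)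
  have hden : 3 * E ^ 2 ≤ (1 - T ^ 2) * (1 - ‖x‖ ^ 2) := by
    have hzT := le_one_sub_sq_of_mul_one_add_eq hE hE2 hT
    have hxT2 : ‖x‖ ^ 2 ≤ T ^ 2 := pow_le_pow_left₀ (norm_nonneg x) hxT.le 2
    nlinarith
  have hfrac : 2 * ‖EuclideanSpace.single 0 T - x‖ ^ 2 / ((1 - T ^ 2) * (1 - ‖x‖ ^ 2)) ≤
      1 / 6 + exp q / 24 := by
    rw [div_le_iff₀ ((by positivity : (0 : ℝ) < 3 * E ^ 2).trans_le hden)]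
    calc 2 * ‖EuclideanSpace.single 0 T - x‖ ^ 2 ≤ 2 * ((E / 2) ^ 2 + exp q * E ^ 2 / 16) := by
          linarith
      _ = (1 / 6 + exp q / 24) * (3 * E ^ 2) := by ring
      _ ≤ (1 / 6 + exp q / 24) * ((1 - T ^ 2) * (1 - ‖x‖ ^ 2)) := by gcongr
  have hcosh : exp q / 2 ≤ cosh ρ := by
    calc exp q / 2 ≤ cosh q := by rw [cosh_eq]; linarith [exp_pos (-q)]
      _ ≤ cosh ρ := cosh_le_cosh.2 (abs_le_abs_of_nonneg (by linarith) hqρ)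
  have he : 2.7 ≤ exp q := by linarith [exp_one_gt_d9, exp_le_exp.2 hq]
  linarith

theorem axialBox_subset_Bplus {q ρ : ℝ} (hE : 0 < E) (hE2 : E ≤ 1 / 2)
    (hT : T * (1 + E) = 1 - E) (hq : 1 ≤ q) (hqρ : q ≤ ρ) (hqE : exp q * E ≤ 1)
    (hh : d * h ^ 2 ≤ exp q * E ^ 2 / 16) :
    axialBox d (T - E / 2) (T - E / 4) h ⊆ Bplus (EuclideanSpace.single 0 T) ρ := by
  intro x hx
  have hT3 := one_third_le_of_mul_one_add_eq hE hE2 hT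
  have hT1 := lt_one_of_mul_one_add_eq hE hT
  have hxT := norm_lt_of_mem_axialBox hE hE2 hT (by nlinarith) hx
  have hz : ‖EuclideanSpace.single (0 : Fin (d + 1)) T‖ = T := norm_single_zero (by linarith)
  refine ⟨hxT.trans hT1, hDist_single_lt_of_mem_axialBox hE hE2 hT hq hqρ hqE hh hx, ?_⟩
  exact hDist_zero_lt_hDist_zero (hz.symm ▸ hxT) (hz.symm ▸ hT1)

end BoxInBplus

section RadialBox

variable {d : ℕ} {r q : ℝ}

def radialBox (d : ℕ) (r q : ℝ) : Set (EuclideanSpace ℝ (Fin (d + 1))) :=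
  axialBox d (tanh (r / 2) - exp (-r) / 2) (tanh (r / 2) - exp (-r) / 4)
    (exp (q / 2) * exp (-r) / 4 / √(d + 1))

theorem exp_neg_le_half (hr : 1 ≤ r) : exp (-r) ≤ 1 / 2 :=
  (exp_le_exp.2 (neg_le_neg hr)).trans exp_neg_one_lt_half.le

theorem radialBox_subset_Bplus {ρ : ℝ} (hr : 1 ≤ r) (hq : 1 ≤ q) (hqr : q ≤ r) (hqρ : q ≤ ρ) :
    radialBox d r q ⊆ Bplus (EuclideanSpace.single 0 (tanh (r / 2))) ρ := by
  have hqE : exp q * exp (-r) ≤ 1 := by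
    rw [← exp_add]
    exact exp_le_one_iff.2 (by linarith)
  refine axialBox_subset_Bplus (exp_pos _) (exp_neg_le_half hr) (tanh_half_mul_one_add_exp_neg r)
    hq hqρ hqE ?_
  have hq2 : exp (q / 2) ^ 2 = exp q := by rw [← exp_nat_mul]; ring_nf
  rw [div_pow, sq_sqrt (by positivity), mul_div_assoc', div_le_iff₀ (by positivity)]
  simp only [div_pow, mul_pow, hq2]
  nlinarith [exp_pos q, exp_pos (-r)]

theorem one_sub_norm_sq_le_of_mem_radialBox {x : EuclideanSpace ℝ (Fin (d + 1))} (hr : 1 ≤ r)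
    (hx : x ∈ radialBox d r q) : 1 - ‖x‖ ^ 2 ≤ 5 * exp (-r) :=
  one_sub_norm_sq_le_of_mem_axialBox (exp_pos _) (exp_neg_le_half hr)
    (tanh_half_mul_one_add_exp_neg r) hx

theorem ofReal_mul_volume_radialBox (r q : ℝ) :
    ENNReal.ofReal ((2 / (5 * exp (-r))) ^ (d + 1)) * volume (radialBox d r q) =
      ENNReal.ofReal ((2 / 5) ^ (d + 1) / 4 / (2 * √(d + 1)) ^ d * exp (d * q / 2)) := by
  rw [radialBox, volume_axialBox _ _ (by positivity), ← ENNReal.ofReal_mul (by positivity)]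
  congr 1
  have hexp : exp (d * q / 2) = exp (q / 2) ^ d := by rw [← exp_nat_mul]; ring_nf
  have hs : √((d : ℝ) + 1) ≠ 0 := by positivity
  rw [hexp, show tanh (r / 2) - exp (-r) / 4 - (tanh (r / 2) - exp (-r) / 2) = exp (-r) / 4 by ring,
    show 2 * (exp (q / 2) * exp (-r) / 4 / √(d + 1)) = exp (q / 2) * exp (-r) / (2 * √(d + 1)) by
      ring]
  simp only [div_pow, mul_pow]
  field_simp
  ring

end RadialBox

theorem volume_Bplus_lower_bound_general (d : ℕ) :
    ∃ c : ℝ, 0 < c ∧ ∀ (r ρ : ℝ), 1 ≤ r → 1 ≤ ρ →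
      ∀ u : EuclideanSpace ℝ (Fin (d + 1)), ‖u‖ = 1 →
        ENNReal.ofReal (c * Real.exp (d * min ρ r / 2)) ≤
          hVolume d (Bplus (polar r u) ρ) := by
  refine ⟨(2 / 5) ^ (d + 1) / 4 / (2 * √(d + 1)) ^ d, by positivity, fun r ρ hr hρ u hu => ?_⟩
  obtain ⟨f, hfu⟩ : ∃ f : EuclideanSpace ℝ (Fin (d + 1)) ≃ₗᵢ[ℝ] EuclideanSpace ℝ (Fin (d + 1)),
      f u = EuclideanSpace.single 0 1 := ⟨_, Submodule.reflection_sub (by simpa using hu)⟩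
  have hfz : f (polar r u) = EuclideanSpace.single 0 (tanh (r / 2)) := by
    ext i; simp [polar, hfu, PiLp.single_apply]
  have hbox : radialBox d r (min ρ r) ⊆ Bplus (EuclideanSpace.single 0 (tanh (r / 2))) ρ :=
    radialBox_subset_Bplus hr (le_min hρ hr) (min_le_right ρ r) (min_le_left ρ r)
  calc _ = ENNReal.ofReal ((2 / (5 * exp (-r))) ^ (d + 1)) *
        volume (f ⁻¹' radialBox d r (min ρ r)) := by
        have hm : MeasurableSet (radialBox d r (min ρ r)) := measurableSet_axialBox _ _ _
        rw [f.measurePreserving.measure_preimage hm.nullMeasurableSet, ofReal_mul_volume_radialBox]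
    _ ≤ hVolume d (f ⁻¹' radialBox d r (min ρ r)) :=
        ofReal_mul_volume_le_hVolume fun x hx => ⟨by simpa using (hbox hx).1,
          by simpa using one_sub_norm_sq_le_of_mem_radialBox hr hx⟩
    _ ≤ hVolume d (Bplus (polar r u) ρ) := by
        rw [← preimage_Bplus f.toLinearIsometry, LinearIsometryEquiv.coe_toLinearIsometry, hfz]
        exact measure_mono (preimage_mono hbox)

/-- For `z = (r; u)` with `r ≥ 1` and `ρ ≥ 1`, the hyperbolic volume of
`B⁺(z,ρ)` is at least `c · e^{d(ρ ∧ r)/2}` for a constant `c > 0` depending only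
on `d`. -/
theorem volume_Bplus_lower_bound (d : ℕ) (hd : 1 ≤ d) :
    ∃ c : ℝ, 0 < c ∧ ∀ (r ρ : ℝ), 1 ≤ r → 1 ≤ ρ →
      ∀ u : EuclideanSpace ℝ (Fin (d + 1)), ‖u‖ = 1 →
        ENNReal.ofReal (c * Real.exp (d * min ρ r / 2)) ≤
          hVolume d (Bplus (polar r u) ρ) :=
  volume_Bplus_lower_bound_general d

end
end

section
/- Fix r0 ≥ 2, radii r0 ≤ r3 ≤ r0 + δ with δ ≤ 1, angles α ≥ 0 and a constant A ≥ 1 with A e^{-r0} ≤ π/3. Let r' ∈ [r0 − 1, r0]. If θ' and θ3 are angles with θ' ≤ α + A e^{-r0} and θ3 ≥ α + 3 A e^{-r0}, then cosh(r0) cosh(r') − cos(θ') sinh(r0) sinh(r') ≤ cosh(r0) cosh(r3) − cos(θ3) sinh(r0) sinh(r3); equivalently, by the hyperbolic law of cosines, the point at radius r' and angular separation θ' from a base point on S(r0) is at most as far as the point at radius r3 and angular separation θ3, provided sinh(r') ≤ sinh(r0) ≤ sinh(r3) and 1 − cos(θ') ≤ 1 − cos(θ3) with θ', θ3 ∈ [0,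 π]. -/
/-!
By the hyperbolic law of cosines both sides are `cosh` of distances, and the point at radius
`r₃` is at least as far as the point at radius `r₀` in the same direction. If `θ₃ ≥ π/2`, the
distance is monotone in the radius as well as in the angle, so the point at radius `r' ≤ r₀` and
angle `θ'` is closer. Otherwise the angular gap `θ₃ - θ' ≥ 2 A e^{-r₀}` gives
`cos θ' - cos θ₃ ≥ (5/2) A² e^{-2r₀}`, which after multiplication by `sinh² r₀ ≈ e^{2r₀}/4` beats
the radial defect `cosh (r₀ - r') - 1 ≤ cosh 1 - 1`.
-/

open Real

/-- `cosh` of the hyperbolic distance between points at distances `a` and `b` from a common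
origin, seen from it under the angle `θ`. -/
noncomputable def hypCoshDist (a b θ : ℝ) : ℝ :=
  cosh a * cosh b - cos θ * sinh a * sinh b

namespace hypCoshDist

theorem eq_cosh_sub_add (a b θ : ℝ) :
    hypCoshDist a b θ = cosh (a - b) + (1 - cos θ) * sinh a * sinh b := by
  rw [hypCoshDist, cosh_sub]; ring

theorem self_le {a b : ℝ} (θ : ℝ) (ha : 0 ≤ a) (hab : a ≤ b) :
    hypCoshDist a a θ ≤ hypCoshDist a b θ := by
  rw [eq_cosh_sub_add, eq_cosh_sub_add, sub_self, cosh_zero]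
  have hcos : 0 ≤ 1 - cos θ := sub_nonneg.2 (cos_le_one θ)
  exact add_le_add (one_le_cosh _) <| mul_le_mul_of_nonneg_left (sinh_le_sinh.2 hab) <|
    mul_nonneg hcos (sinh_nonneg_iff.2 ha)

theorem anti_cos {a b θ₁ θ₂ : ℝ} (ha : 0 ≤ a) (hb : 0 ≤ b) (h : cos θ₂ ≤ cos θ₁) :
    hypCoshDist a b θ₁ ≤ hypCoshDist a b θ₂ := by
  have := mul_nonneg (sinh_nonneg_iff.2 ha) (sinh_nonneg_iff.2 hb)
  unfold hypCoshDist
  nlinarith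

theorem mono_of_cos_nonpos {a b c θ : ℝ} (hθ : cos θ ≤ 0) (ha : 0 ≤ a) (hb : 0 ≤ b)
    (hbc : b ≤ c) : hypCoshDist a b θ ≤ hypCoshDist a c θ := by
  have hcosh : cosh b ≤ cosh c := cosh_le_cosh.2 <| by
    rwa [abs_of_nonneg hb, abs_of_nonneg (hb.trans hbc)]
  have hsinh : sinh b ≤ sinh c := sinh_le_sinh.2 hbc
  have := mul_le_mul_of_nonneg_left hcosh (cosh_pos a).le
  have := mul_le_mul_of_nonneg_left hsinh (mul_nonneg (neg_nonneg.2 hθ) (sinh_nonneg_iff.2 ha))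
  unfold hypCoshDist
  linarith

theorem le_self_of_cos_gap {a b θ₁ θ₂ : ℝ} (ha : 0 ≤ a) (hba : b ≤ a) (hab : a - b ≤ 1)
    (hgap : cosh 1 - 1 ≤ (cos θ₁ - cos θ₂) * sinh a ^ 2) :
    hypCoshDist a b θ₁ ≤ hypCoshDist a a θ₂ := by
  rw [eq_cosh_sub_add, eq_cosh_sub_add, sub_self, cosh_zero]
  have hcosh : cosh (a - b) ≤ cosh 1 := cosh_le_cosh.2 <| by
    rwa [abs_of_nonneg (sub_nonneg.2 hba), abs_one]
  have hsinh : (1 - cos θ₁) * sinh a * sinh b ≤ (1 - cos θ₁) * sinh a * sinh a :=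
    mul_le_mul_of_nonneg_left (sinh_le_sinh.2 hba) <|
      mul_nonneg (sub_nonneg.2 (cos_le_one θ₁)) (sinh_nonneg_iff.2 ha)
  nlinarith

end hypCoshDist

theorem four_mul_sin_sq_mul_cos_le_cos_sub_cos {α e : ℝ} (hα : 0 ≤ α) (he : 0 ≤ e)
    (h : α + 2 * e ≤ π / 2) : 4 * sin e ^ 2 * cos e ≤ cos (α + e) - cos (α + 3 * e) := by
  have hsin : sin (2 * e) ≤ sin (α + 2 * e) :=
    sin_le_sin_of_le_of_le_pi_div_two (by linarith [pi_pos]) h (by linarith)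
  have hsin_e : 0 ≤ sin e := sin_nonneg_of_nonneg_of_le_pi he (by linarith [pi_pos])
  have hprod : cos (α + e) - cos (α + 3 * e) = 2 * sin (α + 2 * e) * sin e := by
    rw [cos_sub_cos, show (α + e + (α + 3 * e)) / 2 = α + 2 * e by ring,
      show (α + e - (α + 3 * e)) / 2 = -e by ring, sin_neg]
    ring
  rw [sin_two_mul] at hsin
  rw [hprod]
  nlinarith

theorem five_div_two_mul_sq_le_four_mul_sin_sq_mul_cos {e : ℝ} (he₀ : 0 ≤ e) (he : e ≤ 3 / 5) :
    5 / 2 * e ^ 2 ≤ 4 * sin e ^ 2 * cos e := by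
  rcases he₀.eq_or_lt with rfl | hpos
  · simp
  have hcube : e ^ 3 ≤ 9 / 25 * e := by
    have : e ^ 2 ≤ (3 / 5) ^ 2 := pow_le_pow_left₀ he₀ he 2
    nlinarith
  have hsin : 91 / 100 * e ≤ sin e := by linarith [sin_gt_sub_cube hpos]
  have hcos : 41 / 50 ≤ cos e := by nlinarith [one_sub_sq_div_two_le_cos (x := e)]
  have hsq : (91 / 100 * e) ^ 2 ≤ sin e ^ 2 := pow_le_pow_left₀ (by positivity) hsin 2
  nlinarith

theorem five_div_two_mul_sq_le_cos_sub_cos {α e θ₁ θ₂ : ℝ} (hα : 0 ≤ α) (he : 0 ≤ e)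
    (hθ₁ : 0 ≤ θ₁) (hθ₁e : θ₁ ≤ α + e) (hθ₂e : α + 3 * e ≤ θ₂) (hθ₂ : θ₂ < π / 2) :
    5 / 2 * e ^ 2 ≤ cos θ₁ - cos θ₂ := by
  have hπ := pi_lt_d2
  have h₁ : cos (α + e) ≤ cos θ₁ := cos_le_cos_of_nonneg_of_le_pi hθ₁ (by linarith) hθ₁e
  have h₂ : cos θ₂ ≤ cos (α + 3 * e) :=
    cos_le_cos_of_nonneg_of_le_pi (by linarith) (by linarith) hθ₂e
  linarith [five_div_two_mul_sq_le_four_mul_sin_sq_mul_cos he (by norm_num at hπ; linarith),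
    four_mul_sin_sq_mul_cos_le_cos_sub_cos hα he (by linarith)]

theorem cosh_one_lt : cosh 1 < 31 / 20 := by
  have h₁ := exp_one_lt_d9
  have h₂ : (exp 1)⁻¹ < 10 / 27 := by
    rw [inv_lt_comm₀ (exp_pos 1) (by norm_num)]; linarith [exp_one_gt_d9]
  rw [cosh_eq, exp_neg]
  norm_num at h₁
  linarith

theorem exp_neg_mul_sinh_ge {r : ℝ} (hr : 2 ≤ r) : 12 / 25 ≤ exp (-r) * sinh r := by
  have hexp2 : 7 ≤ exp 2 := by
    rw [show (2 : ℝ) = 1 + 1 by norm_num, exp_add]; nlinarith [exp_one_gt_d9]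
  have hle : exp (-r) ≤ 1 / 7 := by
    calc exp (-r) ≤ exp (-2) := exp_le_exp.2 (by linarith)
      _ = (exp 2)⁻¹ := exp_neg 2
      _ ≤ 1 / 7 := by rw [one_div]; exact inv_anti₀ (by norm_num) hexp2
  have hmul : exp (-r) * sinh r = (1 - exp (-r) ^ 2) / 2 := by
    have : exp (-r) * exp r = 1 := by rw [← exp_add, neg_add_cancel, exp_zero]
    rw [sinh_eq]
    linear_combination this / 2
  nlinarith [exp_pos (-r)]

theorem law_of_cosines_comparison_general
    (r₀ r₃ r' α A θ' θ₃ : ℝ)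
    (hr₀ : 2 ≤ r₀) (hr₃ : r₀ ≤ r₃)
    (hα : 0 ≤ α) (hA : 1 ≤ A)
    (hr'l : r₀ - 1 ≤ r') (hr'u : r' ≤ r₀)
    (hθ'0 : 0 ≤ θ') (hθ₃π : θ₃ ≤ π)
    (hθ' : θ' ≤ α + A * Real.exp (-r₀)) (hθ₃ : α + 3 * A * Real.exp (-r₀) ≤ θ₃)
    (hcos : 1 - Real.cos θ' ≤ 1 - Real.cos θ₃) :
    Real.cosh r₀ * Real.cosh r' - Real.cos θ' * Real.sinh r₀ * Real.sinh r' ≤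
      Real.cosh r₀ * Real.cosh r₃ - Real.cos θ₃ * Real.sinh r₀ * Real.sinh r₃ := by
  change hypCoshDist r₀ r' θ' ≤ hypCoshDist r₀ r₃ θ₃
  have hr₀' : 0 ≤ r₀ := by linarith
  refine le_trans ?_ (hypCoshDist.self_le θ₃ hr₀' hr₃)
  rcases le_or_gt (π / 2) θ₃ with hobtuse | hacute
  · have hneg : cos θ₃ ≤ 0 := cos_nonpos_of_pi_div_two_le_of_le hobtuse (by linarith [pi_pos])
    calc hypCoshDist r₀ r' θ' ≤ hypCoshDist r₀ r' θ₃ :=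
          hypCoshDist.anti_cos hr₀' (by linarith) (by linarith)
      _ ≤ hypCoshDist r₀ r₀ θ₃ := hypCoshDist.mono_of_cos_nonpos hneg hr₀' (by linarith) hr'u
  · set e := A * exp (-r₀)
    have heS : 12 / 25 ≤ e * sinh r₀ := by
      rw [mul_assoc]
      exact (exp_neg_mul_sinh_ge hr₀).trans <| le_mul_of_one_le_left
        (mul_nonneg (exp_pos _).le (sinh_nonneg_iff.2 hr₀')) hA
    have hangle : 5 / 2 * e ^ 2 ≤ cos θ' - cos θ₃ :=
      five_div_two_mul_sq_le_cos_sub_cos hα (by positivity) hθ'0 hθ' (by linarith) hacute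
    refine hypCoshDist.le_self_of_cos_gap hr₀' hr'u (by linarith) ?_
    calc cosh 1 - 1 ≤ 5 / 2 * (12 / 25) ^ 2 := by linarith [cosh_one_lt]
      _ ≤ 5 / 2 * (e * sinh r₀) ^ 2 := by gcongr
      _ = 5 / 2 * e ^ 2 * sinh r₀ ^ 2 := by ring
      _ ≤ (cos θ' - cos θ₃) * sinh r₀ ^ 2 := by gcongr

/-- Distance comparison via the hyperbolic law of cosines: with `r₀ ≥ 2`,
`r₀ ≤ r₃ ≤ r₀ + δ`, `δ ≤ 1`, `α ≥ 0`, `A ≥ 1`, `A e^{-r₀} ≤ π/3`,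
`r' ∈ [r₀ − 1, r₀]`, angular separations `θ', θ₃ ∈ [0, π]` with
`θ' ≤ α + A e^{-r₀}` and `θ₃ ≥ α + 3A e^{-r₀}`, and provided
`sinh r' ≤ sinh r₀ ≤ sinh r₃` and `1 − cos θ' ≤ 1 − cos θ₃`, one has
`cosh r₀ cosh r' − cos θ' sinh r₀ sinh r' ≤ cosh r₀ cosh r₃ − cos θ₃ sinh r₀ sinh r₃`,
i.e. the point at radius `r'` and angle `θ'` from a base point of `S(r₀)` is at most
as far from it as the point at radius `r₃` and angle `θ₃`. -/
theorem law_of_cosines_comparison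
    (r₀ r₃ r' δ α A θ' θ₃ : ℝ)
    (hr₀ : 2 ≤ r₀) (hδ : δ ≤ 1) (hr₃ : r₀ ≤ r₃) (hr₃' : r₃ ≤ r₀ + δ)
    (hα : 0 ≤ α) (hA : 1 ≤ A) (hAsmall : A * Real.exp (-r₀) ≤ π / 3)
    (hr'l : r₀ - 1 ≤ r') (hr'u : r' ≤ r₀)
    (hθ'0 : 0 ≤ θ') (hθ'π : θ' ≤ π) (hθ₃0 : 0 ≤ θ₃) (hθ₃π : θ₃ ≤ π)
    (hθ' : θ' ≤ α + A * Real.exp (-r₀)) (hθ₃ : α + 3 * A * Real.exp (-r₀) ≤ θ₃)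
    (hsinh : Real.sinh r' ≤ Real.sinh r₀ ∧ Real.sinh r₀ ≤ Real.sinh r₃)
    (hcos : 1 - Real.cos θ' ≤ 1 - Real.cos θ₃) :
    Real.cosh r₀ * Real.cosh r' - Real.cos θ' * Real.sinh r₀ * Real.sinh r' ≤
      Real.cosh r₀ * Real.cosh r₃ - Real.cos θ₃ * Real.sinh r₀ * Real.sinh r₃ :=
  law_of_cosines_comparison_general r₀ r₃ r' α A θ' θ₃ hr₀ hr₃ hα hA hr'l hr'u hθ'0 hθ₃π hθ' hθ₃
    hcos
end
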